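/- arXiv:1501.00871 — 2 statements merged into one kernel-verified Lean document; each statement's English description precedes it below -/
import Mathlib

section
/- Let a, b ≥ 0 with a + b ≥ 1, and let w be any binary word of length a + b + 1 containing exactly a + 1 ones. Then 2·(value of 11 0^b 1^a) < 3·(value of 1 w), where both words have length a + b + 2. -/
/-- Base-2 value of a binary word (most significant bit first). -/
def val (w : List Bool) : ℕ :=
  w.foldl (fun n b => 2 * n + b.toNat) 0

/-!
Reading `11 0^b 1^a` gives `3·2^(a+b) + 2^a - 1`. A word with `k` ones has value at least
`2^k - 1` (the value of `1^k`, its ones pushed to the end), so `1w` has value at least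
`2^(a+b+1) + 2^(a+1) - 1`, and three times this beats twice the former.
-/

theorem val_concat (w : List Bool) (x : Bool) : val (w ++ [x]) = 2 * val w + x.toNat := by
  simp [val]

theorem val_append (u v : List Bool) : val (u ++ v) = val u * 2 ^ v.length + val v := by
  induction v using List.reverseRecOn with
  | nil => simp [val]
  | append_singleton v x ih =>
    rw [← List.append_assoc, val_concat, val_concat, ih, List.length_append, List.length_singleton,
      pow_succ]
    ring

theorem val_replicate_false (n : ℕ) : val (List.replicate n false) = 0 := by
  induction n with
  | zero => rfl
  | succ n ih => rw [List.replicate_succ', val_concat, ih]; rfl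

theorem val_replicate_true_add_one (n : ℕ) : val (List.replicate n true) + 1 = 2 ^ n := by
  induction n with
  | zero => rfl
  | succ n ih =>
    rw [List.replicate_succ', val_concat, pow_succ, ← ih, Bool.toNat_true]
    ring

theorem two_pow_count_true_le_val_add_one (w : List Bool) : 2 ^ w.count true ≤ val w + 1 := by
  induction w using List.reverseRecOn with
  | nil => simp [val]
  | append_singleton w x ih =>
    rw [val_concat, List.count_append]
    cases x
    · rw [show [false].count true = 0 from rfl, add_zero, Bool.toNat_false]
      omega
    · rw [List.count_singleton_self, pow_succ, Bool.toNat_true]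
      omega

theorem stmt7_general (a b : ℕ)
    (w : List Bool) (hl : w.length = a + b + 1) (hc : w.count true = a + 1) :
    2 * val ([true, true] ++ List.replicate b false ++ List.replicate a true) <
      3 * val ([true] ++ w) := by
  have hlhs : val ([true, true] ++ List.replicate b false ++ List.replicate a true) + 1 =
      3 * 2 ^ (a + b) + 2 ^ a := by
    rw [val_append, val_append, val_replicate_false, List.length_replicate, List.length_replicate,
      show val [true, true] = 3 from rfl, pow_add]
    linarith [val_replicate_true_add_one a]
  have hrhs : val ([true] ++ w) = 2 ^ (a + b + 1) + val w := by
    rw [val_append, hl, show val [true] = 1 from rfl, one_mul]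
  have hw := two_pow_count_true_le_val_add_one w
  rw [hc] at hw
  rw [pow_succ] at hrhs hw
  omega

theorem stmt7 (a b : ℕ) (hab : 1 ≤ a + b)
    (w : List Bool) (hl : w.length = a + b + 1) (hc : w.count true = a + 1) :
    2 * val ([true, true] ++ List.replicate b false ++ List.replicate a true) <
      3 * val ([true] ++ w) :=
  stmt7_general a b w hl hc
end

section
/- Let a, b_1, b_2 ≥ 0 with b_2 + a ≥ 1, and let w be any binary word of length b_2 + a + 1 containing exactly a + 1 ones. Then 2·(value of 0^{b_1} 11 0^{b_2} 1^a) < 3·(value of 0^{b_1} 1 w), where both words have length b_1 + 2 + b_2 + a. -/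
private lemma foldl_shift (w : List Bool) : ∀ n : ℕ,
    w.foldl (fun n b => 2 * n + b.toNat) n = n * 2 ^ w.length + val w := by
  induction w with
  | nil => intro n; simp [val]
  | cons b t ih =>
    intro n
    simp only [List.foldl_cons, val, List.length_cons]
    rw [ih, ih]
    ring

private lemma foldl_false (k : ℕ) : ∀ n : ℕ,
    (List.replicate k false).foldl (fun n b => 2 * n + b.toNat) n = 2 ^ k * n := by
  induction k with
  | zero => intro n; simp
  | succ k ih =>
    intro n
    simp only [List.replicate_succ, List.foldl_cons]
    rw [ih, pow_succ]
    simp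
    ring

private lemma foldl_true (k : ℕ) : ∀ n : ℕ,
    (List.replicate k true).foldl (fun n b => 2 * n + b.toNat) n
      = 2 ^ k * n + (2 ^ k - 1) := by
  induction k with
  | zero => intro n; simp
  | succ k ih =>
    intro n
    simp only [List.replicate_succ, List.foldl_cons, Bool.toNat_true]
    rw [ih, pow_succ]
    have h1 : (1 : ℕ) ≤ 2 ^ k := Nat.one_le_two_pow
    have h2 : 2 ^ k * (2 * n + 1) = 2 ^ k * 2 * n + 2 ^ k := by ring
    omega

private lemma lower (w : List Bool) : ∀ n : ℕ,
    2 ^ (w.count true) * (n + 1) - 1 ≤ w.foldl (fun n b => 2 * n + b.toNat) n := by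
  induction w with
  | nil => intro n; simp
  | cons b t ih =>
    intro n
    simp only [List.foldl_cons]
    have h := ih (2 * n + b.toNat)
    cases b with
    | true =>
      have hc : ((true :: t).count true) = t.count true + 1 := by simp
      rw [hc, pow_succ]
      simp only [Bool.toNat_true] at h ⊢
      calc 2 ^ t.count true * 2 * (n + 1) - 1
          = 2 ^ t.count true * (2 * n + 1 + 1) - 1 := by ring_nf
        _ ≤ _ := h
    | false =>
      have hc : ((false :: t).count true) = t.count true := by simp
      rw [hc]
      simp only [Bool.toNat_false, add_zero] at h ⊢
      refine le_trans (Nat.sub_le_sub_right (Nat.mul_le_mul_left _ ?_) 1) h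
      omega

theorem stmt14 (a b1 b2 : ℕ) (hab : 1 ≤ b2 + a)
    (w : List Bool) (hl : w.length = b2 + a + 1) (hc : w.count true = a + 1) :
    2 * val (List.replicate b1 false ++ [true, true] ++ List.replicate b2 false ++
        List.replicate a true) <
      3 * val (List.replicate b1 false ++ [true] ++ w) := by
  have hL : val (List.replicate b1 false ++ [true, true] ++ List.replicate b2 false ++
      List.replicate a true) = 3 * 2 ^ (b2 + a) + (2 ^ a - 1) := by
    simp only [val, List.foldl_append, foldl_false, foldl_true, List.foldl_cons,
      List.foldl_nil, Bool.toNat_true, mul_zero]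
    rw [pow_add]
    ring_nf
  have hR : val (List.replicate b1 false ++ [true] ++ w)
      = 2 ^ (b2 + a + 1) + val w := by
    simp only [val, List.foldl_append]
    rw [foldl_false, foldl_shift, hl]
    simp [val]
  have hw : 2 ^ (a + 1) - 1 ≤ val w := by
    have := lower w 0
    rw [hc] at this
    simpa [val] using this
  have h1 : (1 : ℕ) ≤ 2 ^ a := Nat.one_le_two_pow
  have h2 : (1 : ℕ) ≤ 2 ^ (a + 1) := Nat.one_le_two_pow
  rw [hL, hR]
  rw [pow_succ] at *
  omega
end
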